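/- The function d(A,B) = (1/α)(tr[A^{2α} + B^{2α} − 2(A^α B^{2α} A^α)^{1/2}])^{1/2} is a metric on the set of n×n real symmetric positive semi-definite matrices for every fixed α > 0. -/

import Mathlib

/-!
Write `X = A^α`, `Y = B^α`. Since `X Y² X = (Y X)ᵀ (Y X)`, the polar decomposition
`Y X = W √(X Y² X)` with `W` orthogonal, together with `tr (U P) ≤ tr P` for orthogonal `U` and
`P ⪰ 0`, gives `tr √(X Y² X) = max_U tr (U Y X)`, that is
`(α d(A, B))² = min_U ‖X - U Y‖²_F` over orthogonal `U`. A distance between orbits of a group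
acting by isometries is symmetric and satisfies the triangle inequality. If it vanishes then
`X = U Y`, so `X² = Xᵀ X = Yᵀ Y = Y²`, hence `X = Y` and `A = B`.
-/

open Classical in
/-- The positive semi-definite square root of a positive semi-definite real matrix
(junk value `0` if the matrix is not positive semi-definite). -/
noncomputable def psdSqrt {n : ℕ} (M : Matrix (Fin n) (Fin n) ℝ) : Matrix (Fin n) (Fin n) ℝ :=
  if h : M.PosSemidef then
    (h.1.eigenvectorUnitary : Matrix (Fin n) (Fin n) ℝ) *
      Matrix.diagonal (fun i => Real.sqrt (h.1.eigenvalues i)) *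
      (star h.1.eigenvectorUnitary : Matrix (Fin n) (Fin n) ℝ)
  else 0

open Classical in
/-- The real power `M ^ r` of a symmetric real matrix, defined through the spectral
functional calculus: `M ^ r = U diag(λᵢ^r) Uᵀ` (with `0 ^ r = 0` for `r > 0`).
Junk value `0` if `M` is not symmetric. -/
noncomputable def matPow {n : ℕ} (M : Matrix (Fin n) (Fin n) ℝ) (r : ℝ) :
    Matrix (Fin n) (Fin n) ℝ :=
  if h : M.IsHermitian then
    (h.eigenvectorUnitary : Matrix (Fin n) (Fin n) ℝ) *
      Matrix.diagonal (fun i => h.eigenvalues i ^ r) *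
      (star h.eigenvectorUnitary : Matrix (Fin n) (Fin n) ℝ)
  else 0

open Matrix
open scoped MatrixOrder ComplexOrder

attribute [local instance] frobeniusNormedAddCommGroup

theorem LinearMap.exists_linearIsometry_range_apply_eq {𝕜 E F : Type*} [RCLike 𝕜]
    [NormedAddCommGroup E] [InnerProductSpace 𝕜 E]
    [NormedAddCommGroup F] [InnerProductSpace 𝕜 F]
    (f g : E →ₗ[𝕜] F) (h : ∀ x, ‖f x‖ = ‖g x‖) :
    ∃ L : range f →ₗᵢ[𝕜] F, ∀ x, L ⟨f x, mem_range_self f x⟩ = g x := by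
  have hker : ker f ≤ ker g := fun x hx => by
    rw [mem_ker, ← norm_eq_zero, ← h, norm_eq_zero]; exact hx
  let L : range f →ₗ[𝕜] F := (ker f).liftQ g hker ∘ₗ f.quotKerEquivRange.symm.toLinearMap
  have hL : ∀ x, L ⟨f x, mem_range_self f x⟩ = g x := fun x => by
    simp [L, quotKerEquivRange_symm_apply_image]
  refine ⟨{ toLinearMap := L, norm_map' := ?_ }, hL⟩
  rintro ⟨_, x, rfl⟩
  rw [hL, ← h]; rfl

theorem ContinuousLinearMap.exists_mem_unitary_eq_mul_of_star_mul_self_eq {𝕜 H : Type*}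
    [RCLike 𝕜] [NormedAddCommGroup H] [InnerProductSpace 𝕜 H] [CompleteSpace H]
    [FiniteDimensional 𝕜 H]
    {a b : H →L[𝕜] H} (h : star a * a = star b * b) :
    ∃ u ∈ unitary (H →L[𝕜] H), a = u * b := by
  have hnorm : ∀ x, ‖(b : H →ₗ[𝕜] H) x‖ = ‖(a : H →ₗ[𝕜] H) x‖ := fun x => by
    have ha := a.apply_norm_sq_eq_inner_adjoint_left x
    have hb := b.apply_norm_sq_eq_inner_adjoint_left x
    rw [← star_eq_adjoint, ← mul_def, h] at ha
    rw [← star_eq_adjoint, ← mul_def] at hb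
    exact (sq_eq_sq₀ (norm_nonneg _) (norm_nonneg _)).mp (hb.trans ha.symm)
  obtain ⟨L, hL⟩ := LinearMap.exists_linearIsometry_range_apply_eq _ _ hnorm
  let U := L.extend.toLinearIsometryEquiv rfl
  refine ⟨Unitary.linearIsometryEquiv.symm U, SetLike.coe_mem _, ?_⟩
  ext x
  exact (hL x).symm.trans (L.extend_apply _).symm

namespace Matrix

theorem exists_mem_unitary_eq_mul_of_conjTranspose_mul_self_eq {𝕜 m : Type*} [RCLike 𝕜]
    [Fintype m] [DecidableEq m] {A B : Matrix m m 𝕜} (h : Aᴴ * A = Bᴴ * B) :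
    ∃ U ∈ unitary (Matrix m m 𝕜), A = U * B := by
  let T : Matrix m m 𝕜 ≃⋆ₐ[𝕜] _ := toEuclideanCLM
  have h' : star (T A) * T A = star (T B) * T B := by
    simp only [← map_star, ← map_mul, star_eq_conjTranspose, h]
  obtain ⟨u, hu, hAu⟩ := ContinuousLinearMap.exists_mem_unitary_eq_mul_of_star_mul_self_eq h'
  refine ⟨T.symm u, Unitary.map_mem _ hu, ?_⟩
  rw [← T.symm_apply_apply A, hAu, map_mul, T.symm_apply_apply]

theorem exists_mem_unitary_eq_mul_sqrt {𝕜 m : Type*} [RCLike 𝕜]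
    [Fintype m] [DecidableEq m] (A : Matrix m m 𝕜) :
    ∃ U ∈ unitary (Matrix m m 𝕜), A = U * CFC.sqrt (Aᴴ * A) := by
  apply exists_mem_unitary_eq_mul_of_conjTranspose_mul_self_eq
  have hAA : 0 ≤ Aᴴ * A := (posSemidef_conjTranspose_mul_self A).nonneg
  rw [← star_eq_conjTranspose (CFC.sqrt _), (CFC.sqrt_nonneg (Aᴴ * A)).isSelfAdjoint.star_eq,
    CFC.sqrt_mul_sqrt_self _ hAA]

section Frobenius

variable {m n : Type*} [Fintype m] [Fintype n]

theorem frobenius_norm_sq_eq_trace (A : Matrix m n ℝ) : ‖A‖ ^ 2 = (Aᵀ * A).trace := by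
  rw [frobenius_norm_def, ← Real.rpow_natCast, ← Real.rpow_mul (by positivity)]
  norm_num [trace, mul_apply, Finset.sum_comm (γ := m), sq]

theorem frobenius_norm_sub_sq (A B : Matrix m n ℝ) :
    ‖A - B‖ ^ 2 = ‖A‖ ^ 2 + ‖B‖ ^ 2 - 2 * (Aᵀ * B).trace := by
  have hBA : (Bᵀ * A).trace = (Aᵀ * B).trace := by
    rw [← trace_transpose, transpose_mul, transpose_transpose]
  simp only [frobenius_norm_sq_eq_trace, transpose_sub, Matrix.sub_mul, Matrix.mul_sub, trace_sub]
  linarith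

variable [DecidableEq m]

theorem frobenius_norm_orthogonal_mul {U : Matrix m m ℝ} (hU : U ∈ orthogonalGroup m ℝ)
    (A : Matrix m n ℝ) : ‖U * A‖ = ‖A‖ := by
  rw [← sq_eq_sq₀ (norm_nonneg _) (norm_nonneg _), frobenius_norm_sq_eq_trace,
    frobenius_norm_sq_eq_trace, transpose_mul, Matrix.mul_assoc, ← Matrix.mul_assoc Uᵀ,
    (mem_orthogonalGroup_iff' m ℝ).1 hU, Matrix.one_mul]

end Frobenius

section Trace

variable {m : Type*} [Fintype m] [DecidableEq m]

/-- With `Q = √P`, this is `0 ≤ ‖Q - U Q‖² = 2 tr P - 2 tr (U P)`. -/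
theorem trace_orthogonal_mul_le_trace {U P : Matrix m m ℝ} (hU : U ∈ orthogonalGroup m ℝ)
    (hP : P.PosSemidef) : (U * P).trace ≤ P.trace := by
  set Q := CFC.sqrt P
  have hQ : Qᵀ = Q := by
    have := (CFC.sqrt_nonneg P).isSelfAdjoint
    rwa [IsSelfAdjoint, star_eq_conjTranspose, conjTranspose_eq_transpose_of_trivial] at this
  have hQQ : Q * Q = P := CFC.sqrt_mul_sqrt_self P hP.nonneg
  have h := frobenius_norm_sub_sq Q (U * Q)
  rw [frobenius_norm_orthogonal_mul hU, frobenius_norm_sq_eq_trace Q, hQ, hQQ, trace_mul_comm,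
    Matrix.mul_assoc, hQQ] at h
  nlinarith [sq_nonneg ‖Q - U * Q‖]

theorem trace_orthogonal_mul_le_trace_sqrt {U : Matrix m m ℝ} (hU : U ∈ orthogonalGroup m ℝ)
    (A : Matrix m m ℝ) : (U * A).trace ≤ (CFC.sqrt (Aᵀ * A)).trace := by
  obtain ⟨W, hW, hA⟩ := exists_mem_unitary_eq_mul_sqrt A
  rw [conjTranspose_eq_transpose_of_trivial] at hA
  conv_lhs => rw [hA, ← Matrix.mul_assoc]
  exact trace_orthogonal_mul_le_trace (mul_mem hU hW) (CFC.sqrt_nonneg _).posSemidef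

theorem exists_trace_orthogonal_mul_eq_trace_sqrt (A : Matrix m m ℝ) :
    ∃ U ∈ orthogonalGroup m ℝ, (U * A).trace = (CFC.sqrt (Aᵀ * A)).trace := by
  obtain ⟨W, hW, hA⟩ := exists_mem_unitary_eq_mul_sqrt A
  rw [conjTranspose_eq_transpose_of_trivial] at hA
  refine ⟨star W, Unitary.star_mem hW, ?_⟩
  conv_lhs => rw [hA, ← Matrix.mul_assoc, Unitary.star_mul_self_of_mem hW, Matrix.one_mul]

end Trace

end Matrix

section Procrustes

variable {m : Type*} [Fintype m] {X Y Z : Matrix m m ℝ}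

theorem mul_mul_self_mul_eq_transpose_mul_self (hX : X.IsSymm) (hY : Y.IsSymm) :
    X * (Y * Y) * X = (Y * X)ᵀ * (Y * X) := by
  rw [transpose_mul, hX.eq, hY.eq]
  simp only [Matrix.mul_assoc]

variable [DecidableEq m]

noncomputable def procrustesDist (X Y : Matrix m m ℝ) : ℝ :=
  √((X * X).trace + (Y * Y).trace - 2 * (CFC.sqrt (X * (Y * Y) * X)).trace)

theorem norm_sub_orthogonal_mul_sq (hX : X.IsSymm) (hY : Y.IsSymm) {U : Matrix m m ℝ}
    (hU : U ∈ orthogonalGroup m ℝ) :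
    ‖X - U * Y‖ ^ 2 = (X * X).trace + (Y * Y).trace - 2 * (U * (Y * X)).trace := by
  rw [frobenius_norm_sub_sq, frobenius_norm_orthogonal_mul hU, frobenius_norm_sq_eq_trace,
    frobenius_norm_sq_eq_trace, hX.eq, hY.eq, trace_mul_comm X (U * Y), Matrix.mul_assoc]

theorem procrustesDist_le_norm_sub (hX : X.IsSymm) (hY : Y.IsSymm) {U : Matrix m m ℝ}
    (hU : U ∈ orthogonalGroup m ℝ) : procrustesDist X Y ≤ ‖X - U * Y‖ := by
  rw [← Real.sqrt_sq (norm_nonneg (X - U * Y)), norm_sub_orthogonal_mul_sq hX hY hU,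
    procrustesDist, mul_mul_self_mul_eq_transpose_mul_self hX hY]
  gcongr
  exact trace_orthogonal_mul_le_trace_sqrt hU _

theorem exists_procrustesDist_eq_norm_sub (hX : X.IsSymm) (hY : Y.IsSymm) :
    ∃ U ∈ orthogonalGroup m ℝ, procrustesDist X Y = ‖X - U * Y‖ := by
  obtain ⟨U, hU, htr⟩ := exists_trace_orthogonal_mul_eq_trace_sqrt (Y * X)
  refine ⟨U, hU, ?_⟩
  rw [← Real.sqrt_sq (norm_nonneg (X - U * Y)), norm_sub_orthogonal_mul_sq hX hY hU,
    procrustesDist, mul_mul_self_mul_eq_transpose_mul_self hX hY, htr]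

theorem procrustesDist_comm (hX : X.IsSymm) (hY : Y.IsSymm) :
    procrustesDist X Y = procrustesDist Y X := by
  suffices h : ∀ {X Y : Matrix m m ℝ}, X.IsSymm → Y.IsSymm →
      procrustesDist Y X ≤ procrustesDist X Y from le_antisymm (h hY hX) (h hX hY)
  intro X Y hX hY
  obtain ⟨U, hU, hXY⟩ := exists_procrustesDist_eq_norm_sub hX hY
  calc procrustesDist Y X ≤ ‖Y - star U * X‖ :=
        procrustesDist_le_norm_sub hY hX (Unitary.star_mem hU)
    _ = ‖U * (Y - star U * X)‖ := (frobenius_norm_orthogonal_mul hU _).symm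
    _ = procrustesDist X Y := by
      rw [hXY, Matrix.mul_sub, ← Matrix.mul_assoc, Unitary.mul_star_self_of_mem hU,
        Matrix.one_mul, ← norm_neg, neg_sub]

theorem procrustesDist_triangle (hX : X.IsSymm) (hY : Y.IsSymm) (hZ : Z.IsSymm) :
    procrustesDist X Z ≤ procrustesDist X Y + procrustesDist Y Z := by
  obtain ⟨U, hU, hXY⟩ := exists_procrustesDist_eq_norm_sub hX hY
  obtain ⟨V, hV, hYZ⟩ := exists_procrustesDist_eq_norm_sub hY hZ
  calc procrustesDist X Z ≤ ‖X - U * V * Z‖ :=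
        procrustesDist_le_norm_sub hX hZ (mul_mem hU hV)
    _ ≤ ‖X - U * Y‖ + ‖U * (Y - V * Z)‖ := by
      rw [Matrix.mul_sub, ← Matrix.mul_assoc]; exact norm_sub_le_norm_sub_add_norm_sub _ _ _
    _ = procrustesDist X Y + procrustesDist Y Z := by
      rw [frobenius_norm_orthogonal_mul hU, hXY, hYZ]

theorem procrustesDist_self (hX : X.IsSymm) : procrustesDist X X = 0 :=
  le_antisymm (by simpa using procrustesDist_le_norm_sub hX hX (one_mem _)) (Real.sqrt_nonneg _)

theorem procrustesDist_eq_zero_iff (hX : X.PosSemidef) (hY : Y.PosSemidef) :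
    procrustesDist X Y = 0 ↔ X = Y := by
  have hXs : X.IsSymm := isHermitian_iff_isSymm.1 hX.1
  have hYs : Y.IsSymm := isHermitian_iff_isSymm.1 hY.1
  refine ⟨fun h => ?_, fun h => h ▸ procrustesDist_self hXs⟩
  obtain ⟨U, hU, hXY⟩ := exists_procrustesDist_eq_norm_sub hXs hYs
  have hXUY : X = U * Y := sub_eq_zero.1 (norm_eq_zero.1 (hXY ▸ h))
  have hsq : X * X = Y * Y := by
    calc X * X = (U * Y)ᵀ * (U * Y) := by rw [← hXUY, hXs.eq]
      _ = Y * Y := by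
        rw [transpose_mul, Matrix.mul_assoc, ← Matrix.mul_assoc Uᵀ,
          (mem_orthogonalGroup_iff' m ℝ).1 hU, Matrix.one_mul, hYs.eq]
  rw [← CFC.sqrt_mul_self X hX.nonneg, hsq, CFC.sqrt_mul_self Y hY.nonneg]

end Procrustes

section MatPow

variable {n : ℕ} {A B : Matrix (Fin n) (Fin n) ℝ}

theorem matPow_eq_cfc (hA : A.IsHermitian) (r : ℝ) :
    matPow A r = cfc (fun x : ℝ => x ^ r) A := by
  rw [matPow, dif_pos hA, hA.cfc_eq, IsHermitian.cfc, RCLike.ofReal_real_eq_id]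
  rfl

theorem posSemidef_matPow (hA : A.PosSemidef) (r : ℝ) : (matPow A r).PosSemidef := by
  rw [matPow_eq_cfc hA.1]
  exact (cfc_nonneg fun x hx =>
    Real.rpow_nonneg (spectrum_nonneg_of_nonneg hA.nonneg hx) r).posSemidef

theorem isSymm_matPow (hA : A.PosSemidef) (r : ℝ) : (matPow A r).IsSymm :=
  isHermitian_iff_isSymm.1 (posSemidef_matPow hA r).1

theorem matPow_two_mul (hA : A.PosSemidef) (r : ℝ) :
    matPow A (2 * r) = matPow A r * matPow A r := by
  have hfin := A.finite_real_spectrum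
  rw [matPow_eq_cfc hA.1, matPow_eq_cfc hA.1,
    ← cfc_mul _ _ A (hfin.continuousOn _) (hfin.continuousOn _)]
  refine cfc_congr fun x hx => ?_
  rw [mul_comm, Real.rpow_mul (spectrum_nonneg_of_nonneg hA.nonneg hx), Real.rpow_two, sq]

theorem cfc_rpow_inv_matPow (hA : A.PosSemidef) {r : ℝ} (hr : r ≠ 0) :
    cfc (fun x : ℝ => x ^ r⁻¹) (matPow A r) = A := by
  have hfin := A.finite_real_spectrum
  rw [matPow_eq_cfc hA.1, ← cfc_comp _ _ A hA.1.isSelfAdjoint ((hfin.image _).continuousOn _)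
    (hfin.continuousOn _)]
  conv_rhs => rw [← cfc_id ℝ A hA.1.isSelfAdjoint]
  refine cfc_congr fun x hx => ?_
  rw [Function.comp_apply, id_eq, ← Real.rpow_mul (spectrum_nonneg_of_nonneg hA.nonneg hx),
    mul_inv_cancel₀ hr, Real.rpow_one]

theorem matPow_inj (hA : A.PosSemidef) (hB : B.PosSemidef) {r : ℝ} (hr : r ≠ 0) :
    matPow A r = matPow B r ↔ A = B :=
  ⟨fun h => by rw [← cfc_rpow_inv_matPow hA hr, h, cfc_rpow_inv_matPow hB hr],
    congrArg (matPow · r)⟩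

theorem psdSqrt_eq_sqrt {M : Matrix (Fin n) (Fin n) ℝ} (h : M.PosSemidef) :
    psdSqrt M = CFC.sqrt M := by
  rw [psdSqrt, dif_pos h, CFC.sqrt_eq_cfc, cfc_nnreal_eq_real _ M, h.1.cfc_eq, IsHermitian.cfc,
    RCLike.ofReal_real_eq_id, Unitary.conjStarAlgAut_apply]
  congr 3
  funext i
  simp only [Function.comp_apply, id_eq, Real.coe_sqrt, Real.coe_toNNReal',
    max_eq_left (h.eigenvalues_nonneg i)]

end MatPow

theorem procrustesDist_matPow {n : ℕ} {A B : Matrix (Fin n) (Fin n) ℝ} (hA : A.PosSemidef)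
    (hB : B.PosSemidef) (r : ℝ) :
    procrustesDist (matPow A r) (matPow B r) = √((matPow A (2 * r) + matPow B (2 * r)
      - 2 • psdSqrt (matPow A r * matPow B (2 * r) * matPow A r)).trace) := by
  have hXYX : (matPow A r * (matPow B r * matPow B r) * matPow A r).PosSemidef := by
    rw [mul_mul_self_mul_eq_transpose_mul_self (isSymm_matPow hA r) (isSymm_matPow hB r),
      ← conjTranspose_eq_transpose_of_trivial]
    exact posSemidef_conjTranspose_mul_self _
  rw [procrustesDist, matPow_two_mul hA, matPow_two_mul hB, psdSqrt_eq_sqrt hXYX, trace_sub,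
    trace_add, trace_smul, nsmul_eq_mul, Nat.cast_ofNat]

/-- For fixed `α > 0`, the Alpha Procrustes distance
`d(A,B) = (1/α)(tr[A^{2α} + B^{2α} − 2(A^α B^{2α} A^α)^{1/2}])^{1/2}` is a metric on the set
of `n × n` real symmetric positive semi-definite matrices: it is nonnegative, symmetric,
vanishes exactly on the diagonal, and satisfies the triangle inequality. -/
theorem stmt7 {n : ℕ} (α : ℝ) (hα : 0 < α)
    (d : Matrix (Fin n) (Fin n) ℝ → Matrix (Fin n) (Fin n) ℝ → ℝ)
    (hd : ∀ A B, d A B = (1 / α) * Real.sqrt ((matPow A (2 * α) + matPow B (2 * α)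
        - 2 • psdSqrt (matPow A α * matPow B (2 * α) * matPow A α)).trace)) :
    (∀ A B : Matrix (Fin n) (Fin n) ℝ, A.PosSemidef → B.PosSemidef → 0 ≤ d A B) ∧
    (∀ A B : Matrix (Fin n) (Fin n) ℝ, A.PosSemidef → B.PosSemidef → d A B = d B A) ∧
    (∀ A B : Matrix (Fin n) (Fin n) ℝ, A.PosSemidef → B.PosSemidef → (d A B = 0 ↔ A = B)) ∧
    (∀ A B C : Matrix (Fin n) (Fin n) ℝ, A.PosSemidef → B.PosSemidef → C.PosSemidef →
      d A C ≤ d A B + d B C) := by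
  have hdist : ∀ {A B : Matrix (Fin n) (Fin n) ℝ}, A.PosSemidef → B.PosSemidef →
      d A B = (1 / α) * procrustesDist (matPow A α) (matPow B α) := fun hA hB => by
    rw [hd, procrustesDist_matPow hA hB]
  refine ⟨fun A B _ _ => ?_, fun A B hA hB => ?_, fun A B hA hB => ?_, fun A B C hA hB hC => ?_⟩
  · rw [hd]
    positivity
  · rw [hdist hA hB, hdist hB hA, procrustesDist_comm (isSymm_matPow hA α) (isSymm_matPow hB α)]
  · rw [hdist hA hB, mul_eq_zero, procrustesDist_eq_zero_iff (posSemidef_matPow hA α)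
      (posSemidef_matPow hB α), matPow_inj hA hB hα.ne']
    simp [hα.ne']
  · rw [hdist hA hC, hdist hA hB, hdist hB hC, ← mul_add]
    exact mul_le_mul_of_nonneg_left (procrustesDist_triangle (isSymm_matPow hA α)
      (isSymm_matPow hB α) (isSymm_matPow hC α)) (by positivity)
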